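/- arXiv:math/0304171 — 2 statements merged into one kernel-verified Lean document; each statement's English description precedes it below -/
import Mathlib

section
/- The direct image of a Plott function is a Plott function: if φ: X → Y is a map of finite sets and f is a Plott function on X, then φ_*(f) defined by φ_*(f)(B) = φ(f(φ^{-1}(B))) for B ⊆ Y is a Plott function on Y. -/
open Set

variable {X Y Z : Type*}

/-- A choice function: `f A ⊆ A` for all `A`. -/
def IsChoice (f : Set X → Set X) : Prop := ∀ A, f A ⊆ A

/-- A Plott function: choice function satisfying path independence. -/
def IsPlott (f : Set X → Set X) : Prop :=
  IsChoice f ∧ ∀ A B : Set X, f (A ∪ B) = f (f A ∪ B)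

/-- Direct image of a choice function along `φ`. -/
def dimage (φ : X → Y) (f : Set X → Set X) : Set Y → Set Y :=
  fun B => φ '' f (φ ⁻¹' B)

/-- Outcast property: if `f S ⊆ M ⊆ S` then `f M = f S`. -/
lemma plott_outcast {f : Set X → Set X} (hf : IsPlott f) {S M : Set X}
    (h1 : f S ⊆ M) (h2 : M ⊆ S) : f M = f S := by
  have : f S = f (S ∪ M) := by rw [Set.union_eq_self_of_subset_right h2]
  rw [this, hf.2 S M, Set.union_eq_self_of_subset_left h1]

/-- the direct image of a Plott function is a Plott function. -/
theorem dimage_plott {X Y : Type*} [Fintype X] [Fintype Y] (φ : X → Y)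
    (f : Set X → Set X) (hf : IsPlott f) :
    IsPlott (dimage φ f) := by
  constructor
  · intro B y hy
    obtain ⟨x, hx, rfl⟩ := hy
    exact hf.1 _ hx
  · intro A B
    unfold dimage
    set S := φ ⁻¹' A with hS
    set T := φ ⁻¹' B with hT
    set M := φ ⁻¹' (φ '' f S) with hM
    have hfSM : f S ⊆ M := Set.subset_preimage_image φ (f S)
    have hMS : M ⊆ S := by
      intro x hx
      obtain ⟨z, hz, hzx⟩ := hx
      have := hf.1 S hz
      simp only [hS, Set.mem_preimage] at this ⊢
      rw [← hzx]; exact this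
    have key : f (S ∪ T) = f (M ∪ T) := by
      rw [hf.2 S T, hf.2 M T, plott_outcast hf hfSM hMS]
    have h1 : φ ⁻¹' (A ∪ B) = S ∪ T := rfl
    have h2 : φ ⁻¹' (φ '' f (φ ⁻¹' A) ∪ B) = M ∪ T := rfl
    rw [h1, h2, key]
end

section
/- In a convex geometry, if P is a piece of an element x (a maximal closed set not containing x), then P ∪ {x} is closed. -/
open Set

variable {X Y Z : Type*}

/-- Closure in a family of sets: intersection of all members containing `A`. -/
def closureOf (𝓕 : Set (Set X)) (A : Set X) : Set X := ⋂₀ {F | F ∈ 𝓕 ∧ A ⊆ F}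

/-- Extreme points of `A` with respect to the closure system `𝓕`. -/
def extPts (𝓕 : Set (Set X)) (A : Set X) : Set X :=
  {a ∈ A | a ∉ closureOf 𝓕 (A \ {a})}

/-- Convex geometry: contains `univ`, closed under intersection, MKM property. -/
def IsConvexGeometry (𝓕 : Set (Set X)) : Prop :=
  Set.univ ∈ 𝓕 ∧ (∀ F ∈ 𝓕, ∀ G ∈ 𝓕, F ∩ G ∈ 𝓕) ∧
    ∀ A : Set X, closureOf 𝓕 A = closureOf 𝓕 (extPts 𝓕 A)

/-- `P` is a piece of `x`: a closed set not containing `x` such that every closed set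
strictly containing `P` contains `x`. -/
def IsPiece (𝓕 : Set (Set X)) (P : Set X) (x : X) : Prop :=
  P ∈ 𝓕 ∧ x ∉ P ∧ ∀ Q ∈ 𝓕, P ⊂ Q → x ∈ Q

/-!
Let `C` be the closure of `P ∪ {x}` and suppose it contains a point `y ∉ P ∪ {x}`. Every closed
set strictly above `P` contains `x`, so removing from `C` a point `z ∉ P` leaves a set whose closure
is again `C` (what is left still contains a point outside `P`: `x`, or `y` when `z = x`). Hence all
extreme points of `C` lie in `P`, and the Minkowski–Krein–Milman property gives `C ⊆ P`,
contradicting `x ∈ C`.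
-/

theorem subset_closureOf (𝓕 : Set (Set X)) (A : Set X) : A ⊆ closureOf 𝓕 A :=
  fun _ ha _ hF => hF.2 ha

theorem closureOf_subset {𝓕 : Set (Set X)} {A F : Set X} (hF : F ∈ 𝓕) (hAF : A ⊆ F) :
    closureOf 𝓕 A ⊆ F :=
  fun _ ha => ha F ⟨hF, hAF⟩

theorem closureOf_mem [Finite X] {𝓕 : Set (Set X)} (huniv : univ ∈ 𝓕) (hinter : InfClosed 𝓕)
    (A : Set X) : closureOf 𝓕 A ∈ 𝓕 :=
  hinter.sInf_mem (toFinite _) huniv fun _ hF => hF.1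

theorem IsPiece.mem_closureOf {𝓕 : Set (Set X)} {P A : Set X} {x : X} (hP : IsPiece 𝓕 P x)
    (hA : closureOf 𝓕 A ∈ 𝓕) (hPA : P ⊆ A) (hAP : ¬A ⊆ P) : x ∈ closureOf 𝓕 A :=
  hP.2.2 _ hA ⟨hPA.trans (subset_closureOf 𝓕 A),
    fun h => hAP ((subset_closureOf 𝓕 A).trans h)⟩

theorem IsPiece.extPts_closureOf_subset {𝓕 : Set (Set X)} {P : Set X} {x y : X}
    (hP : IsPiece 𝓕 P x) (hcl : ∀ A, closureOf 𝓕 A ∈ 𝓕)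
    (hyC : y ∈ closureOf 𝓕 (P ∪ {x})) (hy : y ∉ P ∪ {x}) :
    extPts 𝓕 (closureOf 𝓕 (P ∪ {x})) ⊆ P := by
  set C := closureOf 𝓕 (P ∪ {x})
  rintro z ⟨hzC, hz⟩
  by_contra hzP
  have hPA : P ⊆ C \ {z} := fun p hp =>
    ⟨subset_closureOf 𝓕 _ (Or.inl hp), fun hpz => hzP (hpz ▸ hp)⟩
  have hAP : ¬C \ {z} ⊆ P := by
    obtain rfl | hzx := eq_or_ne z x
    · exact fun h => hy (Or.inl (h ⟨hyC, fun hyz => hy (Or.inr hyz)⟩))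
    · exact fun h => hP.2.1 (h ⟨subset_closureOf 𝓕 _ (Or.inr rfl), hzx.symm⟩)
  have hxA : x ∈ closureOf 𝓕 (C \ {z}) := hP.mem_closureOf (hcl _) hPA hAP
  have hCA : C ⊆ closureOf 𝓕 (C \ {z}) := closureOf_subset (hcl _)
    (union_subset (hPA.trans (subset_closureOf 𝓕 _)) (singleton_subset_iff.2 hxA))
  exact hz (hCA hzC)

/-- if `P` is a piece of `x` then `P ∪ {x}` is closed. -/
theorem piece_union_closed {X : Type*} [Fintype X]
    (𝓕 : Set (Set X)) (h𝓕 : IsConvexGeometry 𝓕)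
    (P : Set X) (x : X) (hP : IsPiece 𝓕 P x) :
    P ∪ {x} ∈ 𝓕 := by
  obtain ⟨huniv, hinter, hMKM⟩ := h𝓕
  have hcl : ∀ A, closureOf 𝓕 A ∈ 𝓕 := closureOf_mem huniv fun F hF G hG => hinter F hF G hG
  set C := closureOf 𝓕 (P ∪ {x})
  suffices hCsub : C ⊆ P ∪ {x} from
    (subset_closureOf 𝓕 _).antisymm hCsub ▸ hcl (P ∪ {x})
  intro y hyC
  by_contra hy
  have hext : extPts 𝓕 C ⊆ P := hP.extPts_closureOf_subset hcl hyC hy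
  have hCP : C ⊆ P := calc
    C ⊆ closureOf 𝓕 C := subset_closureOf 𝓕 C
    _ = closureOf 𝓕 (extPts 𝓕 C) := hMKM C
    _ ⊆ P := closureOf_subset hP.1 hext
  exact hP.2.1 (hCP (subset_closureOf 𝓕 _ (Or.inr rfl)))
end
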